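/- arXiv:1701.03428 — 2 statements merged into one kernel-verified Lean document; each statement's English description precedes it below -/
import Mathlib

section
/- Let Φ be a unital positive linear map and 0 < m ≤ B ≤ m' < M' ≤ A ≤ M. Then for each ν ∈ [0,1], Φ((1−ν)A + νB)² ≤ (K(h)/K(h')^r)² · (Φ(A) #_ν Φ(B))², with r = min{ν,1−ν}, h = M/m, h' = M'/m'. -/
/-- The Kantorovich constant. -/
noncomputable def Kc (x : ℝ) : ℝ := (x + 1) ^ 2 / (4 * x)

/-- The weighted operator geometric mean `A #_ν B`. -/
noncomputable def sharp {𝒜 : Type*} [CStarAlgebra 𝒜] [PartialOrder 𝒜] [StarOrderedRing 𝒜] (ν : ℝ) (a b : 𝒜) : 𝒜 :=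
  CFC.rpow a (1/2) * CFC.rpow (CFC.rpow a (-(1/2)) * b * CFC.rpow a (-(1/2))) ν * CFC.rpow a (1/2)

/-!
Write `a = Φ A`, `b = Φ B`, `X = (1 - ν) a + ν b` and `K = Kc h' ^ r`; the bounds on `A` and `B`
pass to `a` and `b`. The element `Z = a^{-1/2} b a^{-1/2}` satisfies `Z⁻¹ ≥ h'`, so the refined
Young inequality `K s^ν ≤ 1 - ν + ν s` (valid for `s ≥ h' ≥ 1`), applied to `Z⁻¹` through the
functional calculus and conjugated by `a^{-1/2}`, gives `K (a #_ν b)⁻¹ ≤ (1 - ν) a⁻¹ + ν b⁻¹`.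
Adding the Kantorovich bounds `x + M m x⁻¹ ≤ M + m` for `x = a, b` yields
`X + M m K (a #_ν b)⁻¹ ≤ M + m`, and the Bhatia–Kittaneh inequality `‖u v‖ ≤ ‖u + v‖² / 4` turns
this into `X² ≤ ((M + m)² / (4 M m K))² (a #_ν b)²`, which is the claim because
`Kc (M / m) = (M + m)² / (4 M m)`.
-/

open Set Ring CFC

lemma Kc_pos {x : ℝ} (hx : 0 < x) : 0 < Kc x := by
  unfold Kc; positivity

lemma Kc_inv (x : ℝ) : Kc x⁻¹ = Kc x := by
  rcases eq_or_ne x 0 with rfl | hx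
  · simp
  · unfold Kc; field_simp; ring

lemma Kc_mul_self {x : ℝ} (hx : x ≠ 0) : Kc x * x = ((x + 1) / 2) ^ 2 := by
  unfold Kc; field_simp; ring

lemma monotoneOn_Kc : MonotoneOn Kc (Ici 1) := by
  intro x (hx : 1 ≤ x) y (hy : 1 ≤ y) hxy
  unfold Kc
  rw [div_le_div_iff₀ (by positivity) (by positivity)]
  have hxy₁ : 1 ≤ x * y := one_le_mul_of_one_le_of_one_le hx hy
  nlinarith [mul_nonneg (sub_nonneg.mpr hxy) (sub_nonneg.mpr hxy₁)]

/-- As `Kc s * s = ((s + 1) / 2) ^ 2`, this is Bernoulli's inequality with exponent `2 ν ≤ 1`. -/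
lemma Kc_rpow_mul_rpow_le_of_le_half {s ν : ℝ} (hs : 0 < s) (hν₀ : 0 ≤ ν) (hν : ν ≤ 1 / 2) :
    Kc s ^ ν * s ^ ν ≤ 1 - ν + ν * s := by
  calc Kc s ^ ν * s ^ ν = (1 + (s - 1) / 2) ^ (2 * ν) := by
        rw [← Real.mul_rpow (Kc_pos hs).le hs.le, Kc_mul_self hs.ne', ← Real.rpow_natCast,
          ← Real.rpow_mul (by positivity)]
        norm_num; ring_nf
    _ ≤ 1 + 2 * ν * ((s - 1) / 2) :=
        rpow_one_add_le_one_add_mul_self (by linarith) (by linarith) (by linarith)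
    _ = 1 - ν + ν * s := by ring

/-- The case `ν ≥ 1/2` reduces to `ν ≤ 1/2` through `s ↦ s⁻¹`, under which `Kc` is invariant. -/
lemma Kc_rpow_min_mul_rpow_le {s ν : ℝ} (hs : 0 < s) (hν : ν ∈ Icc (0 : ℝ) 1) :
    Kc s ^ min ν (1 - ν) * s ^ ν ≤ 1 - ν + ν * s := by
  obtain ⟨hν₀, hν₁⟩ := hν
  rcases le_total ν (1 - ν) with h | h
  · rw [min_eq_left h]
    exact Kc_rpow_mul_rpow_le_of_le_half hs hν₀ (by linarith)
  · rw [min_eq_right h]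
    have key := Kc_rpow_mul_rpow_le_of_le_half (inv_pos.mpr hs) (sub_nonneg.mpr hν₁)
      (by linarith : 1 - ν ≤ 1 / 2)
    rw [Kc_inv, Real.inv_rpow hs.le] at key
    calc Kc s ^ (1 - ν) * s ^ ν = s * (Kc s ^ (1 - ν) * (s ^ (1 - ν))⁻¹) := by
          rw [Real.rpow_sub hs, Real.rpow_one]; field_simp
      _ ≤ s * (1 - (1 - ν) + (1 - ν) * s⁻¹) := mul_le_mul_of_nonneg_left key hs.le
      _ = 1 - ν + ν * s := by field_simp; ring

lemma Kc_rpow_min_mul_rpow_le_of_le {h s ν : ℝ} (hh : 1 ≤ h) (hs : h ≤ s)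
    (hν : ν ∈ Icc (0 : ℝ) 1) : Kc h ^ min ν (1 - ν) * s ^ ν ≤ 1 - ν + ν * s := by
  have hs₀ : 0 < s := by linarith
  refine le_trans ?_ (Kc_rpow_min_mul_rpow_le hs₀ hν)
  gcongr
  · exact (Kc_pos (by linarith)).le
  · exact le_min hν.1 (sub_nonneg.mpr hν.2)
  · exact monotoneOn_Kc hh (hh.trans hs) hs

lemma ringInverse_smul_one {𝕜 A : Type*} [Field 𝕜] [Ring A] [Algebra 𝕜 A] (r : 𝕜) :
    (r • (1 : A))⁻¹ʳ = r⁻¹ • 1 := by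
  rcases eq_or_ne r 0 with rfl | hr
  · simp
  have hunit : IsUnit (r • (1 : A)) := by
    rw [← Algebra.algebraMap_eq_smul_one]; exact (IsUnit.mk0 r hr).map _
  rw [← inverse_mul_cancel_left _ (r⁻¹ • (1 : A)) hunit, smul_mul_smul_comm, mul_inv_cancel₀ hr,
    one_mul, one_smul, mul_one]

lemma ringInverse_conjugate {M₀ : Type*} [MonoidWithZero M₀] {u : M₀} (hu : IsUnit u) (x : M₀) :
    (u * x * u)⁻¹ʳ = u⁻¹ʳ * x⁻¹ʳ * u⁻¹ʳ := by
  rw [inverse_mul (.inr hu), inverse_mul (.inl hu), mul_assoc]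

section CStarAlgebra

variable {A : Type*} [CStarAlgebra A] [PartialOrder A] [StarOrderedRing A]

lemma le_of_smul_one_le_smul_one [Nontrivial A] {r s : ℝ} (h : r • (1 : A) ≤ s • 1) : r ≤ s := by
  rw [← Algebra.algebraMap_eq_smul_one, ← Algebra.algebraMap_eq_smul_one] at h
  exact (le_algebraMap_iff_spectrum_le (IsSelfAdjoint.algebraMap A (.all r))).mp h r
    (by simp [spectrum.scalar_eq])

lemma ringInverse_le_smul_one_of_smul_one_le {a : A} {r : ℝ} (hr : 0 < r) (h : r • 1 ≤ a) :
    a⁻¹ʳ ≤ r⁻¹ • 1 := by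
  rw [← ringInverse_smul_one]
  exact CStarAlgebra.ringInverse_le_ringInverse h (isStrictlyPositive_one.smul hr)

lemma smul_one_le_ringInverse_of_le_smul_one {a : A} {r : ℝ} (ha : IsStrictlyPositive a)
    (h : a ≤ r • 1) : r⁻¹ • 1 ≤ a⁻¹ʳ := by
  rw [← ringInverse_smul_one]
  exact CStarAlgebra.ringInverse_le_ringInverse h

lemma ringInverse_rpow {a : A} (ha : IsStrictlyPositive a) (x : ℝ) : (a ^ x)⁻¹ʳ = a⁻¹ʳ ^ x := by
  lift a to Aˣ using ha.isUnit
  rw [inverse_unit, ← rpow_neg a x ha.nonneg, ← inverse_mul_cancel_left _ (a ^ (-x) : A)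
    (IsStrictlyPositive.rpow (a : A) x ha).isUnit, rpow_mul_rpow_neg x, mul_one]

lemma smul_rpow_le_of_smul_one_le {w : A} {h ν : ℝ} (hh : 1 ≤ h) (hw : h • 1 ≤ w)
    (hν : ν ∈ Icc (0 : ℝ) 1) : Kc h ^ min ν (1 - ν) • w ^ ν ≤ (1 - ν) • 1 + ν • w := by
  have hw₀ : 0 ≤ w := (smul_nonneg (by linarith) zero_le_one).trans hw
  have hspec : ∀ t ∈ spectrum ℝ w, h ≤ t := by
    rw [← Algebra.algebraMap_eq_smul_one] at hw
    exact (algebraMap_le_iff_le_spectrum (.of_nonneg hw₀)).mp hw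
  have hlhs : Kc h ^ min ν (1 - ν) • w ^ ν = cfc (fun t : ℝ => Kc h ^ min ν (1 - ν) * t ^ ν) w := by
    rw [rpow_eq_cfc_real, cfc_const_mul _ _ w (Real.continuous_rpow_const hν.1).continuousOn]
  have hrhs : (1 - ν) • 1 + ν • w = cfc (fun t : ℝ => (1 - ν) + ν * t) w := by
    rw [cfc_add .., cfc_const .., cfc_const_mul .., cfc_id' .., Algebra.algebraMap_eq_smul_one]
  rw [hlhs, hrhs]
  exact cfc_mono (fun t ht => Kc_rpow_min_mul_rpow_le_of_le hh (hspec t ht) hν)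
    (continuousOn_const.mul (Real.continuous_rpow_const hν.1).continuousOn)

lemma add_smul_ringInverse_le {a : A} {m M : ℝ} (hm : 0 < m) (hma : m • 1 ≤ a) (haM : a ≤ M • 1) :
    a + (M * m) • a⁻¹ʳ ≤ (M + m) • 1 := by
  have ha : IsStrictlyPositive a := (isStrictlyPositive_one.smul hm).of_le hma
  rw [← Algebra.algebraMap_eq_smul_one] at hma haM ⊢
  have hspec_ge := (algebraMap_le_iff_le_spectrum ha.isSelfAdjoint).mp hma
  have hspec_le := (le_algebraMap_iff_spectrum_le ha.isSelfAdjoint).mp haM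
  have hcont : ContinuousOn (fun t : ℝ => t⁻¹) (spectrum ℝ a) :=
    continuousOn_inv₀.mono fun t ht => (hm.trans_le (hspec_ge t ht)).ne'
  have hcfc : a + (M * m) • a⁻¹ʳ = cfc (fun t : ℝ => t + M * m * t⁻¹) a := by
    rw [cfc_add .., cfc_const_mul .., cfc_id' .., cfc_ringInverse_id a ha.isUnit]
  rw [hcfc, cfc_le_algebraMap_iff ..]
  intro t ht
  have ht₀ : 0 < t := hm.trans_le (hspec_ge t ht)
  have key : M + m - (t + M * m * t⁻¹) = (t - m) * (M - t) / t := by field_simp; ring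
  have : 0 ≤ (t - m) * (M - t) / t :=
    div_nonneg (mul_nonneg (sub_nonneg.2 (hspec_ge t ht)) (sub_nonneg.2 (hspec_le t ht))) ht₀.le
  linarith

lemma IsStrictlyPositive.sharp {a b : A} (ha : IsStrictlyPositive a) (hb : IsStrictlyPositive b)
    (ν : ℝ) : IsStrictlyPositive (sharp ν a b) := by
  have hp := IsStrictlyPositive.rpow a (1 / 2) ha
  have hq := IsStrictlyPositive.rpow a (-(1 / 2)) ha
  have hZ := conjugate_of_isUnit_of_isSelfAdjoint b _ hq.isUnit hq.isSelfAdjoint hb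
  exact conjugate_of_isUnit_of_isSelfAdjoint _ _ hp.isUnit hp.isSelfAdjoint (hZ.rpow _ ν)

lemma smul_ringInverse_sharp_le {a b : A} {mp Mp ν : ℝ} (hmp : 0 < mp) (hmpMp : mp < Mp)
    (ha : Mp • 1 ≤ a) (hb : IsStrictlyPositive b) (hbmp : b ≤ mp • 1) (hν : ν ∈ Icc (0 : ℝ) 1) :
    Kc (Mp / mp) ^ min ν (1 - ν) • (sharp ν a b)⁻¹ʳ ≤ (1 - ν) • a⁻¹ʳ + ν • b⁻¹ʳ := by
  have hMp : 0 < Mp := hmp.trans hmpMp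
  have ha' : IsStrictlyPositive a := (isStrictlyPositive_one.smul hMp).of_le ha
  set p := a ^ (1 / 2 : ℝ)
  set q := a ^ (-(1 / 2) : ℝ) with hq
  set Z := q * b * q with hZ
  have hp_unit : IsUnit p := (IsStrictlyPositive.rpow a _ ha').isUnit
  have hq_pos : IsStrictlyPositive q := IsStrictlyPositive.rpow a _ ha'
  have hq_sa : IsSelfAdjoint q := hq_pos.isSelfAdjoint
  have hp_inv : p⁻¹ʳ = q := inverse_rpow a _ (by norm_num) ha'
  have hqq : q * q = a⁻¹ʳ := by
    rw [hq, ← rpow_add ha'.isUnit, inverse_eq_rpow_neg_one ha']; norm_num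
  have hZ_pos : IsStrictlyPositive Z :=
    IsStrictlyPositive.conjugate_of_isUnit_of_isSelfAdjoint b q hq_pos.isUnit hq_sa hb
  have hb_eq : b = p * Z * p := by
    calc b = (p * q) * b * (q * p) := by
          rw [rpow_mul_rpow_neg _ ha', rpow_neg_mul_rpow _ ha', one_mul, mul_one]
      _ = p * Z * p := by simp only [hZ, mul_assoc]
  have hsharp_inv : (sharp ν a b)⁻¹ʳ = q * Z⁻¹ʳ ^ ν * q := by
    change (p * Z ^ ν * p)⁻¹ʳ = _
    rw [ringInverse_conjugate hp_unit, hp_inv, ringInverse_rpow hZ_pos]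
  have hb_inv : b⁻¹ʳ = q * Z⁻¹ʳ * q := by rw [hb_eq, ringInverse_conjugate hp_unit, hp_inv]
  have hZ_le : Z ≤ (mp / Mp) • 1 :=
    calc Z ≤ q * (mp • 1) * q := hq_sa.conjugate_le_conjugate hbmp
      _ = mp • a⁻¹ʳ := by rw [mul_smul_comm, smul_mul_assoc, mul_one, hqq]
      _ ≤ mp • Mp⁻¹ • 1 := smul_le_smul_of_nonneg_left
          (ringInverse_le_smul_one_of_smul_one_le hMp ha) hmp.le
      _ = (mp / Mp) • 1 := by rw [smul_smul, div_eq_mul_inv]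
  have hZ_inv : (Mp / mp) • 1 ≤ Z⁻¹ʳ := by
    simpa using smul_one_le_ringInverse_of_le_smul_one hZ_pos hZ_le
  have young := hq_sa.conjugate_le_conjugate
    (smul_rpow_le_of_smul_one_le ((one_le_div hmp).2 hmpMp.le) hZ_inv hν)
  simp only [mul_add, add_mul, mul_smul_comm, smul_mul_assoc, mul_one] at young
  rwa [hqq, ← hsharp_inv, ← hb_inv] at young

lemma mul_star_le_smul_one_of_star_mul_le {T : A} {r : ℝ} (hr : 0 ≤ r) (h : star T * T ≤ r • 1) :
    T * star T ≤ r • 1 := by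
  rw [← Algebra.algebraMap_eq_smul_one,
    ← CStarAlgebra.norm_le_iff_le_algebraMap _ hr (star_mul_self_nonneg T),
    CStarRing.norm_star_mul_self, ← sq] at h
  calc T * star T ≤ (‖T‖ ^ 2) • 1 := by
        rw [← Algebra.algebraMap_eq_smul_one]; exact CStarAlgebra.mul_star_le_algebraMap_norm_sq
    _ ≤ r • 1 := by gcongr

/-- `C = √(L²/4 + v²)`; on the spectrum of `v` this is the scalar inequality
`(L²/4 + t²)(L - t) ≤ L³/4`, i.e. `t (t - L/2)² ≥ 0`. -/
lemma exists_isSelfAdjoint_mul_self_eq_conjugate_le {v : A} (hv : 0 ≤ v) (L : ℝ) :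
    ∃ C : A, IsSelfAdjoint C ∧ C * C = (L ^ 2 / 4) • 1 + v ^ 2 ∧
      C * (L • 1 - v) * C ≤ (L ^ 3 / 4) • 1 := by
  set f : ℝ → ℝ := fun t => √(L ^ 2 / 4 + t ^ 2)
  have hff : ∀ t, f t * f t = L ^ 2 / 4 + t ^ 2 := fun t => Real.mul_self_sqrt (by positivity)
  refine ⟨cfc f v, cfc_predicate f v, ?_, ?_⟩
  · rw [← cfc_mul .., cfc_congr fun t _ => hff t, cfc_add .., cfc_const .., cfc_pow_id ..,
      Algebra.algebraMap_eq_smul_one]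
  · have hLv : L • 1 - v = cfc (fun t : ℝ => L - t) v := by
      rw [cfc_sub .., cfc_const .., cfc_id' .., Algebra.algebraMap_eq_smul_one]
    rw [hLv, ← cfc_mul .., ← cfc_mul .., ← Algebra.algebraMap_eq_smul_one,
      cfc_le_algebraMap_iff ..]
    intro t ht
    have ht₀ : 0 ≤ t := spectrum_nonneg_of_nonneg hv ht
    rw [mul_right_comm, hff]
    nlinarith [mul_nonneg ht₀ (sq_nonneg (t - L / 2))]

/-- Order form of the Bhatia–Kittaneh inequality `‖u v‖ ≤ ‖u + v‖² / 4`. With `C` as above and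
`T = √u C`, the bound `T* T = C u C ≤ L³/4` passes to `T T* = (L²/4) u + √u v² √u`; conjugating by
`√u` and completing the square in `u` finishes. -/
lemma mul_sq_mul_le_of_add_le {u v : A} {L : ℝ} (hL : 0 ≤ L) (hu : 0 ≤ u) (hv : 0 ≤ v)
    (huv : u + v ≤ L • 1) : u * v ^ 2 * u ≤ (L ^ 2 / 4) ^ 2 • 1 := by
  obtain ⟨C, hC, hCC, hCLC⟩ := exists_isSelfAdjoint_mul_self_eq_conjugate_le hv L
  set s := CFC.sqrt u
  have hs : IsSelfAdjoint s := .of_nonneg (CFC.sqrt_nonneg u)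
  have hss : s * s = u := CFC.sqrt_mul_sqrt_self u hu
  have hT : star (s * C) * (s * C) ≤ (L ^ 3 / 4) • 1 := by
    calc star (s * C) * (s * C) = C * u * C := by
          rw [star_mul, hs.star_eq, hC.star_eq, ← hss]; noncomm_ring
      _ ≤ C * (L • 1 - v) * C := hC.conjugate_le_conjugate (le_sub_iff_add_le.mpr huv)
      _ ≤ _ := hCLC
  have hT' : (L ^ 2 / 4) • u + s * v ^ 2 * s ≤ (L ^ 3 / 4) • 1 := by
    calc (L ^ 2 / 4) • u + s * v ^ 2 * s = s * C * star (s * C) := by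
          rw [star_mul, hs.star_eq, hC.star_eq, mul_assoc s C, ← mul_assoc C C, hCC, ← hss]
          simp only [mul_add, add_mul, mul_smul_comm, smul_mul_assoc, one_mul, mul_assoc]
      _ ≤ _ := mul_star_le_smul_one_of_star_mul_le (by positivity) hT
  have hsq : 0 ≤ (L ^ 2 / 4) • ((L / 2) • 1 - u) ^ 2 :=
    smul_nonneg (by positivity)
      (((IsSelfAdjoint.all (L / 2)).smul (.one A)).sub (.of_nonneg hu)).sq_nonneg
  calc u * v ^ 2 * u = s * (s * v ^ 2 * s) * s := by rw [← hss]; noncomm_ring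
    _ ≤ s * ((L ^ 3 / 4) • 1 - (L ^ 2 / 4) • u) * s :=
        hs.conjugate_le_conjugate (le_sub_iff_add_le'.mpr hT')
    _ = (L ^ 2 / 4) ^ 2 • 1 - (L ^ 2 / 4) • ((L / 2) • 1 - u) ^ 2 := by
        rw [← hss]
        simp only [sq, mul_sub, sub_mul, smul_mul_assoc, mul_smul_comm, smul_smul, mul_one, one_mul,
          smul_sub, mul_assoc]
        module
    _ ≤ _ := sub_le_self _ hsq

lemma sq_le_smul_sq_of_add_smul_ringInverse_le {x y : A} {c L : ℝ} (hc : 0 < c) (hL : 0 ≤ L)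
    (hx : 0 ≤ x) (hy : IsStrictlyPositive y) (h : x + c • y⁻¹ʳ ≤ L • 1) :
    x ^ 2 ≤ (L ^ 2 / (4 * c)) ^ 2 • y ^ 2 := by
  have hBK := hy.isSelfAdjoint.conjugate_le_conjugate <| mul_sq_mul_le_of_add_le hL
    (smul_nonneg hc.le hy.ringInverse.nonneg) hx (by rwa [add_comm])
  have hyx : y * (c • y⁻¹ʳ * x ^ 2 * c • y⁻¹ʳ) * y = c ^ 2 • x ^ 2 := by
    simp only [smul_mul_assoc, mul_smul_comm, smul_smul, ← mul_assoc,
      mul_inverse_cancel y hy.isUnit, inverse_mul_cancel_right y _ hy.isUnit, one_mul, sq]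
  rw [hyx, mul_smul_comm, smul_mul_assoc, mul_one, ← sq] at hBK
  calc x ^ 2 = (c ^ 2)⁻¹ • c ^ 2 • x ^ 2 := by
        rw [smul_smul, inv_mul_cancel₀ (by positivity), one_smul]
    _ ≤ (c ^ 2)⁻¹ • (L ^ 2 / 4) ^ 2 • y ^ 2 := smul_le_smul_of_nonneg_left hBK (by positivity)
    _ = _ := by rw [smul_smul]; congr 1; field_simp

lemma sq_convexComb_le_smul_sq_sharp [Nontrivial A] {a b : A} {m mp Mp M ν : ℝ} (hm : 0 < m)
    (hmb : m • 1 ≤ b) (hbmp : b ≤ mp • 1) (hmpMp : mp < Mp) (hMpa : Mp • 1 ≤ a)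
    (haM : a ≤ M • 1) (hν : ν ∈ Icc (0 : ℝ) 1) :
    ((1 - ν) • a + ν • b) ^ 2 ≤
      ((Kc (M / m) / Kc (Mp / mp) ^ min ν (1 - ν)) ^ 2) • sharp ν a b ^ 2 := by
  have hmp : 0 < mp := hm.trans_le (le_of_smul_one_le_smul_one (hmb.trans hbmp))
  have hM : 0 < M := (hmp.trans hmpMp).trans_le (le_of_smul_one_le_smul_one (hMpa.trans haM))
  have hb_a : b ≤ a := hbmp.trans ((by gcongr : mp • (1 : A) ≤ Mp • 1).trans hMpa)
  have ha : IsStrictlyPositive a := (isStrictlyPositive_one.smul hm).of_le (hmb.trans hb_a)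
  have hb : IsStrictlyPositive b := (isStrictlyPositive_one.smul hm).of_le hmb
  set K := Kc (Mp / mp) ^ min ν (1 - ν)
  have hK : 0 < K := Real.rpow_pos_of_pos (Kc_pos (div_pos (hmp.trans hmpMp) hmp)) _
  have hsum : (1 - ν) • a + ν • b + (M * m * K) • (sharp ν a b)⁻¹ʳ ≤ (M + m) • 1 :=
    calc (1 - ν) • a + ν • b + (M * m * K) • (sharp ν a b)⁻¹ʳ
        ≤ (1 - ν) • a + ν • b + (M * m) • ((1 - ν) • a⁻¹ʳ + ν • b⁻¹ʳ) := by
          rw [mul_smul]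
          gcongr
          exact smul_ringInverse_sharp_le hmp hmpMp hMpa hb hbmp hν
      _ = (1 - ν) • (a + (M * m) • a⁻¹ʳ) + ν • (b + (M * m) • b⁻¹ʳ) := by module
      _ ≤ (1 - ν) • (M + m) • 1 + ν • (M + m) • 1 := add_le_add
          (smul_le_smul_of_nonneg_left (add_smul_ringInverse_le hm (hmb.trans hb_a) haM)
            (sub_nonneg.2 hν.2))
          (smul_le_smul_of_nonneg_left (add_smul_ringInverse_le hm hmb (hb_a.trans haM)) hν.1)
      _ = (M + m) • 1 := by module
  have hconst : Kc (M / m) / K = (M + m) ^ 2 / (4 * (M * m * K)) := by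
    unfold Kc; field_simp
  rw [hconst]
  exact sq_le_smul_sq_of_add_smul_ringInverse_le (by positivity) (by positivity)
    (add_nonneg (smul_nonneg (sub_nonneg.2 hν.2) ha.nonneg) (smul_nonneg hν.1 hb.nonneg))
    (ha.sharp hb ν) hsum

end CStarAlgebra

theorem stmt10 {𝒜 ℬ : Type*} [CStarAlgebra 𝒜] [PartialOrder 𝒜] [StarOrderedRing 𝒜]
    [CStarAlgebra ℬ] [PartialOrder ℬ] [StarOrderedRing ℬ]
    (Φ : 𝒜 →ₗ[ℂ] ℬ) (hΦ : ∀ a : 𝒜, 0 ≤ a → 0 ≤ Φ a) (hΦ1 : Φ 1 = 1)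
    (A B : 𝒜) (m mp Mp M ν : ℝ)
    (hm : 0 < m) (hmB : m • (1:𝒜) ≤ B) (hBmp : B ≤ mp • (1:𝒜)) (hmpMp : mp < Mp)
    (hMpA : Mp • (1:𝒜) ≤ A) (hAM : A ≤ M • (1:𝒜)) (hν : ν ∈ Set.Icc (0:ℝ) 1) :
    (Φ ((1 - ν) • A + ν • B)) ^ 2 ≤
      ((Kc (M / m) / Kc (Mp / mp) ^ (min ν (1 - ν))) ^ 2) • (sharp ν (Φ A) (Φ B)) ^ 2 := by
  nontriviality ℬ
  have hΦ_mono : ∀ {x y : 𝒜}, x ≤ y → Φ x ≤ Φ y := fun {x y} h => by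
    simpa using hΦ _ (sub_nonneg.2 h)
  have hΦ_smul_one : ∀ r : ℝ, Φ (r • 1) = r • 1 := fun r => by
    rw [Φ.map_smul_of_tower, hΦ1]
  rw [map_add, Φ.map_smul_of_tower, Φ.map_smul_of_tower]
  refine sq_convexComb_le_smul_sq_sharp hm ?_ ?_ hmpMp ?_ ?_ hν
  · simpa only [hΦ_smul_one] using hΦ_mono hmB
  · simpa only [hΦ_smul_one] using hΦ_mono hBmp
  · simpa only [hΦ_smul_one] using hΦ_mono hMpA
  · simpa only [hΦ_smul_one] using hΦ_mono hAM
end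

section
/- If A, B are positive invertible operators with m ≤ (A^{−1/2} B A^{−1/2})^{1/2} ≤ M for positive reals m ≤ M, then (M+m)(A # B) ≥ MmA + B, where # is the operator geometric mean. -/
/-!
With `C = A^{-1/2} B A^{-1/2}` and `S = C^{1/2}`, the spectral bounds `m ≤ S ≤ M` give
`0 ≤ (M - S)(S - m)`, the two factors being commuting positive elements, i.e.
`Mm + S² ≤ (M + m) S`. Conjugating by `A^{1/2}` turns `1` into `A`, `S² = C` into `B` and
`S` into `A # B`.
-/

open CFC

section Quadratic

variable {A : Type*} [Ring A] [PartialOrder A] [StarRing A] [StarOrderedRing A]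
  [TopologicalSpace A] [Algebra ℝ A] [ContinuousFunctionalCalculus ℝ A IsSelfAdjoint]
  [NonnegSpectrumClass ℝ A]

theorem mul_smul_one_add_mul_self_le_add_smul {a : A} {m M : ℝ}
    (hm : m • (1 : A) ≤ a) (hM : a ≤ M • (1 : A)) :
    (M * m) • (1 : A) + a * a ≤ (M + m) • a := by
  have hcomm : Commute (M • (1 : A) - a) (a - m • 1) :=
    ((Commute.one_left a).smul_left M |>.sub_left (.refl a)).sub_right
      ((Commute.one_right _).smul_right m)
  have hprod := hcomm.mul_nonneg (sub_nonneg.2 hM) (sub_nonneg.2 hm)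
  rw [← sub_nonneg]
  convert hprod using 1
  simp only [mul_sub, sub_mul, smul_mul_assoc, mul_smul_comm, one_mul, mul_one, add_smul]
  module

end Quadratic

section GeometricMean

variable {𝒜 : Type*} [CStarAlgebra 𝒜] [PartialOrder 𝒜] [StarOrderedRing 𝒜]

theorem sharp_half_eq (a b : 𝒜) :
    sharp (1/2) a b =
      a ^ (1/2 : ℝ) * sqrt (a ^ (-(1/2) : ℝ) * b * a ^ (-(1/2) : ℝ)) * a ^ (1/2 : ℝ) := by
  rw [sharp, sqrt_eq_rpow]
  rfl

theorem rpow_half_mul_conj_rpow_neg_half_mul_rpow_half {a : 𝒜} (ha : IsStrictlyPositive a)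
    (b : 𝒜) :
    a ^ (1/2 : ℝ) * (a ^ (-(1/2) : ℝ) * b * a ^ (-(1/2) : ℝ)) * a ^ (1/2 : ℝ) = b := by
  calc _ = (a ^ (1/2 : ℝ) * a ^ (-(1/2) : ℝ)) * b * (a ^ (-(1/2) : ℝ) * a ^ (1/2 : ℝ)) := by
          simp only [mul_assoc]
    _ = b := by rw [rpow_mul_rpow_neg _ ha, rpow_neg_mul_rpow _ ha, one_mul, mul_one]

theorem rpow_half_mul_rpow_half {a : 𝒜} (ha : 0 ≤ a) : a ^ (1/2 : ℝ) * a ^ (1/2 : ℝ) = a := by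
  rw [← sqrt_eq_rpow, sqrt_mul_sqrt_self a ha]

end GeometricMean

theorem stmt18_general {𝒜 : Type*} [CStarAlgebra 𝒜] [PartialOrder 𝒜] [StarOrderedRing 𝒜]
    (A B : 𝒜) (hA : 0 ≤ A) (hB : 0 ≤ B) [Invertible A]
    (m M : ℝ)
    (h1 : m • (1:𝒜) ≤ CFC.sqrt (CFC.rpow A (-(1/2)) * B * CFC.rpow A (-(1/2))))
    (h2 : CFC.sqrt (CFC.rpow A (-(1/2)) * B * CFC.rpow A (-(1/2))) ≤ M • (1:𝒜)) :
    (M * m) • A + B ≤ (M + m) • sharp (1/2) A B := by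
  simp only [rpow_eq_pow] at h1 h2
  have hA' : IsStrictlyPositive A := (isUnit_of_invertible A).isStrictlyPositive hA
  have hC : 0 ≤ A ^ (-(1/2) : ℝ) * B * A ^ (-(1/2) : ℝ) :=
    conjugate_nonneg_of_nonneg hB rpow_nonneg
  have key := conjugate_le_conjugate_of_nonneg
    (mul_smul_one_add_mul_self_le_add_smul h1 h2) (rpow_nonneg : 0 ≤ A ^ (1/2 : ℝ))
  convert key using 1
  · rw [mul_add, add_mul, mul_smul_comm, smul_mul_assoc, mul_one, rpow_half_mul_rpow_half hA,
      sqrt_mul_sqrt_self _ hC, rpow_half_mul_conj_rpow_neg_half_mul_rpow_half hA']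
  · rw [mul_smul_comm, smul_mul_assoc, sharp_half_eq]

theorem stmt18 {𝒜 : Type*} [CStarAlgebra 𝒜] [PartialOrder 𝒜] [StarOrderedRing 𝒜]
    (A B : 𝒜) (hA : 0 ≤ A) (hB : 0 ≤ B) [Invertible A]
    (m M : ℝ) (hm : 0 < m) (hmM : m ≤ M)
    (h1 : m • (1:𝒜) ≤ CFC.sqrt (CFC.rpow A (-(1/2)) * B * CFC.rpow A (-(1/2))))
    (h2 : CFC.sqrt (CFC.rpow A (-(1/2)) * B * CFC.rpow A (-(1/2))) ≤ M • (1:𝒜)) :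
    (M * m) • A + B ≤ (M + m) • sharp (1/2) A B :=
  stmt18_general A B hA hB m M h1 h2
end
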